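/- arXiv:2007.11402 — 3 statements merged into one kernel-verified Lean document; each statement's English description precedes it below -/
import Mathlib

section
/- Let G be a connected graph, X, Y ⊆ V(G) with G[X] and G[Y] connected, Y disjoint from N[X], and suppose the distance in G between X and Y exceeds 10t where t ≥ 1. If G contains no induced cycle on more than t vertices, then at most one connected component of G − (N[X] ∪ N[Y]) that is contained in the component of G − N[X] containing Y is adjacent to a vertex of N[X]. -/
open SimpleGraph

/-- The closed neighborhood `N[X]` of a set of vertices. -/
def closedNbhd {V : Type*} (G : SimpleGraph V) (X : Set V) : Set V :=
  {v | v ∈ X ∨ ∃ x ∈ X, G.Adj x v}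

/-- `ReachWithin G W u v` : there is a walk from `u` to `v` all of whose vertices lie
in `W` (i.e. `u` and `v` are in the same connected component of the subgraph induced
on `W`). -/
def ReachWithin {V : Type*} (G : SimpleGraph V) (W : Set V) (u v : V) : Prop :=
  ∃ p : G.Walk u v, ∀ z ∈ p.support, z ∈ W

/-- A walk is an induced cycle if it is a cycle and every edge of `G` between vertices of
the cycle is an edge of the cycle. -/
def IsInducedCycle {V : Type*} (G : SimpleGraph V) {v : V} (c : G.Walk v v) : Prop :=
  c.IsCycle ∧ ∀ x ∈ c.support, ∀ y ∈ c.support, G.Adj x y → s(x, y) ∈ c.edges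

/-- `G` is `C_{>t}`-free: every induced cycle has at most `t` vertices. -/
def CgtFree {V : Type*} (G : SimpleGraph V) (t : ℕ) : Prop :=
  ∀ (v : V) (c : G.Walk v v), IsInducedCycle G c → c.length ≤ t

/-!
If `d₀` and `d₁` lay in different components `S₀`, `S₁` of `G - (N[X] ∪ N[Y])`, take a shortest
path `T` inside `N[X]` from a vertex attached to `S₁` to one attached to `S₀`, with ends `a₁`, `a₀`,
and then a shortest path `Q` inside `S₀ ∪ S₁ ∪ N[Y]` from a neighbour of `a₀` in `S₀` to a
neighbour of `a₁` in `S₁`. By minimality both paths are chordless, and the only edges between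
them are the two joining edges: a vertex of `T` with a neighbour in `S₀` is `a₀` by minimality of
`T`, that neighbour is the first vertex of `Q` by minimality of `Q`, and `N[X]` and `N[Y]` are
far apart. So `a₀ Q a₁ T a₀` is an induced cycle. As `S₀ ≠ S₁`, `Q` has to pass through `N[Y]`,
so the cycle contains a walk from `N[X]` to `N[Y]`, which has length at least `10t - 1 > t`.
-/

open SimpleGraph.Walk

section

variable {V : Type*} {G : SimpleGraph V}

namespace ReachWithin

variable {W W' : Set V} {u v w : V}

theorem refl (hu : u ∈ W) : ReachWithin G W u u :=
  ⟨nil, by simpa using hu⟩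

theorem symm (h : ReachWithin G W u v) : ReachWithin G W v u := by
  obtain ⟨p, hp⟩ := h
  exact ⟨p.reverse, by simpa using hp⟩

theorem trans (h : ReachWithin G W u v) (h' : ReachWithin G W v w) : ReachWithin G W u w := by
  obtain ⟨p, hp⟩ := h
  obtain ⟨q, hq⟩ := h'
  exact ⟨p.append q, fun z hz => (mem_support_append_iff p q).mp hz |>.elim (hp z) (hq z)⟩

theorem mono (h : ReachWithin G W u v) (hW : W ⊆ W') : ReachWithin G W' u v := by
  obtain ⟨p, hp⟩ := h
  exact ⟨p, fun z hz => hW (hp z hz)⟩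

theorem mem_left (h : ReachWithin G W u v) : u ∈ W := by
  obtain ⟨p, hp⟩ := h
  exact hp u p.start_mem_support

theorem mem_right (h : ReachWithin G W u v) : v ∈ W :=
  h.symm.mem_left

theorem of_adj (h : G.Adj u v) (hu : u ∈ W) (hv : v ∈ W) : ReachWithin G W u v :=
  ⟨h.toWalk, by simp [hu, hv]⟩

theorem reachWithin_setOf {d : V} (hu : ReachWithin G W d u) (hv : ReachWithin G W d v) :
    ReachWithin G {x | ReachWithin G W d x} u v := by
  classical
  have hd : ∀ {y}, ReachWithin G W d y → ReachWithin G {x | ReachWithin G W d x} d y := by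
    rintro y ⟨p, hp⟩
    exact ⟨p, fun z hz =>
      ⟨p.takeUntil z hz, fun x hx => hp x (p.support_takeUntil_subset_support hz hx)⟩⟩
  exact (hd hu).symm.trans (hd hv)

end ReachWithin

theorem isChordless_of_forall_length_le {M : Set V} :
    ∀ {a b : V} (w : G.Walk a b), (∀ z ∈ w.support, z ∈ M) →
      (∀ w' : G.Walk a b, (∀ z ∈ w'.support, z ∈ M) → w.length ≤ w'.length) → w.IsChordless := by
  classical
  intro a b w
  induction w with
  | nil => simp [isChordless_iff_forall_mem_edges]
  | @cons a c b h q ih =>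
    intro hM hmin
    have hqM : ∀ z ∈ q.support, z ∈ M := fun z hz => hM z (by simp [hz])
    have hqmin : ∀ w' : G.Walk c b, (∀ z ∈ w'.support, z ∈ M) → q.length ≤ w'.length :=
      fun w' hw' => by simpa using hmin (cons h w') (by simpa [hM a (by simp)] using hw')
    -- a shortcut from `a` to a later vertex of `q` would beat `cons h q`
    have hnext : ∀ x ∈ q.support, G.Adj a x → x = c := by
      intro x hx hax
      by_contra hxc
      have := hmin (cons hax (q.dropUntil x hx))
        (by simpa [hM a (by simp)] using
          fun z hz => hqM z (q.support_dropUntil_subset_support hx hz))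
      have := length_dropUntil_lt_length hx hxc
      simp only [length_cons] at *
      omega
    have hq := isChordless_iff_forall_mem_edges.mp (ih hqM hqmin)
    rw [isChordless_iff_forall_mem_edges]
    intro u v hu hv huv
    simp only [support_cons, List.mem_cons] at hu hv
    rcases hu with rfl | hu <;> rcases hv with rfl | hv
    · exact (G.irrefl huv).elim
    · simp [hnext v hv huv]
    · simp [hnext u hu huv.symm, Sym2.eq_swap]
    · simp [hq hu hv huv]

theorem exists_shortest_path {M A B : Set V} (h : ∃ a ∈ A, ∃ b ∈ B, ReachWithin G M a b) :
    ∃ a ∈ A, ∃ b ∈ B, ∃ w : G.Walk a b, (∀ z ∈ w.support, z ∈ M) ∧ w.IsPath ∧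
      w.IsChordless ∧ (∀ u ∈ w.support, u ∈ A → u = a) ∧ (∀ u ∈ w.support, u ∈ B → u = b) := by
  classical
  have hex : ∃ n a, a ∈ A ∧ ∃ b ∈ B, ∃ w : G.Walk a b, (∀ z ∈ w.support, z ∈ M) ∧ w.length = n := by
    obtain ⟨a, ha, b, hb, w, hw⟩ := h
    exact ⟨_, a, ha, b, hb, w, hw, rfl⟩
  obtain ⟨a, ha, b, hb, w₀, hw₀M, hw₀⟩ := Nat.find_spec hex
  set w := w₀.bypass
  have hwM : ∀ z ∈ w.support, z ∈ M := fun z hz => hw₀M z (w₀.support_bypass_subset_support hz)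
  have hmin : ∀ a' ∈ A, ∀ b' ∈ B, ∀ w' : G.Walk a' b', (∀ z ∈ w'.support, z ∈ M) →
      w.length ≤ w'.length := fun a' ha' b' hb' w' hw' =>
    (w₀.length_bypass_le_length).trans (hw₀ ▸ Nat.find_min' hex ⟨a', ha', b', hb', w', hw', rfl⟩)
  refine ⟨a, ha, b, hb, w, hwM, w₀.bypass_isPath,
    isChordless_of_forall_length_le w hwM (hmin a ha b hb), fun u hu huA => ?_, fun u hu huB => ?_⟩
  · by_contra hua
    exact (length_dropUntil_lt_length hu hua).not_ge
      (hmin u huA b hb _ fun z hz => hwM z (w.support_dropUntil_subset_support hu hz))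
  · by_contra hub
    exact (length_takeUntil_lt_length hu hub).not_ge
      (hmin a ha u huB _ fun z hz => hwM z (w.support_takeUntil_subset_support hu hz))

theorem isInducedCycle_iff {v : V} (c : G.Walk v v) :
    IsInducedCycle G c ↔ c.IsCycle ∧ c.IsChordless := by
  rw [isChordless_iff_forall_mem_edges]
  exact and_congr_right' ⟨fun h u v hu hv => h u hu v hv, fun h u hu v hv => h hu hv⟩

theorem isInducedCycle_cons_append {a₀ a₁ s₀ s₁ : V} (h₀ : G.Adj a₀ s₀) (h₁ : G.Adj s₁ a₁)
    {Q : G.Walk s₀ s₁} {T : G.Walk a₁ a₀} (hQ : Q.IsPath) (hT : T.IsPath)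
    (hQc : Q.IsChordless) (hTc : T.IsChordless) (hs : s₀ ≠ s₁)
    (hQT : ∀ u ∈ Q.support, ∀ v ∈ T.support,
      u ≠ v ∧ (G.Adj u v → (u = s₀ ∧ v = a₀) ∨ (u = s₁ ∧ v = a₁))) :
    IsInducedCycle G (cons h₀ (Q.append (cons h₁ T))) := by
  rw [isInducedCycle_iff, cons_isCycle_iff, isPath_def, isChordless_iff_forall_mem_edges]
  rw [isChordless_iff_forall_mem_edges] at hQc hTc
  refine ⟨⟨?_, ?_⟩, ?_⟩
  · simp only [support_append, support_cons, List.tail_cons]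
    exact List.nodup_append.mpr ⟨hQ.support_nodup, hT.support_nodup,
      fun u hu v hv => (hQT u hu v hv).1⟩
  · simp only [edges_append, edges_cons, List.mem_append, List.mem_cons, not_or]
    refine ⟨fun he => ?_, fun he => ?_, fun he => ?_⟩
    · exact (hQT a₀ (Q.fst_mem_support_of_mem_edges he) a₀ T.end_mem_support).1 rfl
    · rcases Sym2.eq_iff.mp he with ⟨rfl, -⟩ | ⟨-, rfl⟩
      · exact (hQT a₀ Q.end_mem_support a₀ T.end_mem_support).1 rfl
      · exact hs rfl
    · exact (hQT s₀ Q.start_mem_support s₀ (T.snd_mem_support_of_mem_edges he)).1 rfl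
  · have hmem : ∀ x ∈ (cons h₀ (Q.append (cons h₁ T))).support, x ∈ Q.support ∨ x ∈ T.support := by
      simp only [support_cons, support_append, List.tail_cons, List.mem_cons, List.mem_append]
      rintro x (rfl | hx)
      exacts [Or.inr T.end_mem_support, hx]
    have hcross : ∀ u ∈ Q.support, ∀ v ∈ T.support, G.Adj u v →
        s(u, v) = s(a₀, s₀) ∨ s(u, v) = s(s₁, a₁) := by
      intro u hu v hv huv
      rcases (hQT u hu v hv).2 huv with ⟨rfl, rfl⟩ | ⟨rfl, rfl⟩
      exacts [Or.inl Sym2.eq_swap, Or.inr rfl]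
    simp only [edges_cons, edges_append, List.mem_cons, List.mem_append]
    intro u v hu hv huv
    rcases hmem u hu with hu | hu <;> rcases hmem v hv with hv | hv
    · exact Or.inr (Or.inl (hQc hu hv huv))
    · rcases hcross u hu v hv huv with h | h <;> simp [h]
    · rw [Sym2.eq_swap]
      rcases hcross v hv u hu huv.symm with h | h <;> simp [h]
    · exact Or.inr (Or.inr (Or.inr (hTc hu hv huv)))

theorem reachWithin_of_connected_induce {S : Set V} (hS : (G.induce S).Connected) {u v : V}
    (hu : u ∈ S) (hv : v ∈ S) : ReachWithin G S u v := by
  obtain ⟨p⟩ := hS.preconnected ⟨u, hu⟩ ⟨v, hv⟩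
  let q := p.map (Embedding.induce S).toHom
  have hq : ∀ z ∈ q.support, z ∈ S := by
    simp only [q, Walk.support_map, List.mem_map]
    rintro _ ⟨w, -, rfl⟩
    exact w.2
  exact ⟨q, hq⟩

theorem reachWithin_closedNbhd {S : Set V} (hS : (G.induce S).Connected) {u v : V}
    (hu : u ∈ closedNbhd G S) (hv : v ∈ closedNbhd G S) : ReachWithin G (closedNbhd G S) u v := by
  have hS' : ∀ w ∈ closedNbhd G S, ∃ x ∈ S, ReachWithin G (closedNbhd G S) w x := by
    rintro w (hw | ⟨x, hx, hxw⟩)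
    · exact ⟨w, hw, .refl (Or.inl hw)⟩
    · exact ⟨x, hx, .of_adj hxw.symm (Or.inr ⟨x, hx, hxw⟩) (Or.inl hx)⟩
  obtain ⟨x, hx, hux⟩ := hS' u hu
  obtain ⟨y, hy, hvy⟩ := hS' v hv
  exact hux.trans (((reachWithin_of_connected_induce hS hx hy).mono fun _ => Or.inl).trans hvy.symm)

theorem exists_walk_length_le_one_of_mem_closedNbhd {X : Set V} {a : V}
    (ha : a ∈ closedNbhd G X) : ∃ x ∈ X, ∃ p : G.Walk x a, p.length ≤ 1 := by
  rcases ha with ha | ⟨x, hx, hxa⟩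
  · exact ⟨a, ha, nil, zero_le_one⟩
  · exact ⟨x, hx, hxa.toWalk, le_rfl⟩

theorem exists_dist_le_length_add_two {X Y : Set V} {a b : V} (ha : a ∈ closedNbhd G X)
    (hb : b ∈ closedNbhd G Y) (p : G.Walk a b) :
    ∃ x ∈ X, ∃ y ∈ Y, G.dist x y ≤ p.length + 2 := by
  obtain ⟨x, hx, q, hq⟩ := exists_walk_length_le_one_of_mem_closedNbhd ha
  obtain ⟨y, hy, r, hr⟩ := exists_walk_length_le_one_of_mem_closedNbhd hb
  refine ⟨x, hx, y, hy, (dist_le (q.append (p.append r.reverse))).trans ?_⟩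
  simp only [length_append, length_reverse]
  omega

theorem ReachWithin.exists_adj_mem {N B : Set V} {d y : V} (h : ReachWithin G Nᶜ d y)
    (hy : y ∈ B) (hd : d ∉ B) : ∃ e b, ReachWithin G (N ∪ B)ᶜ d e ∧ G.Adj e b ∧ b ∈ B := by
  obtain ⟨p, hp⟩ := h
  induction p with
  | nil => exact (hd hy).elim
  | @cons d c y h q ih =>
    have hqN : ∀ z ∈ q.support, z ∈ Nᶜ := fun z hz => hp z (by simp [hz])
    have hdW : d ∈ (N ∪ B)ᶜ := by simpa [hd] using hp d (by simp)
    by_cases hc : c ∈ B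
    · exact ⟨d, c, .refl hdW, h, hc⟩
    · obtain ⟨e, b, he, heb, hb⟩ := ih hy hc hqN
      have hcW : c ∈ (N ∪ B)ᶜ := by simpa [hc] using hqN c q.start_mem_support
      exact ⟨e, b, (ReachWithin.of_adj h hdW hcW).trans he, heb, hb⟩

theorem exists_inducedCycle_of_separated {N B S₀ S₁ : Set V}
    (hN : ∀ u ∈ N, ∀ v ∈ N, ReachWithin G N u v) (hB : ∀ u ∈ B, ∀ v ∈ B, ReachWithin G B u v)
    (hS₀ : ∀ u ∈ S₀, ∀ v ∈ S₀, ReachWithin G S₀ u v)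
    (hS₁ : ∀ u ∈ S₁, ∀ v ∈ S₁, ReachWithin G S₁ u v)
    (hNB : ∀ u ∈ N, ∀ v ∈ B, u ≠ v ∧ ¬ G.Adj u v) (hSN : ∀ v ∈ S₀ ∪ S₁, v ∉ N)
    (hS₀₁ : ∀ u ∈ S₀, ∀ v ∈ S₁, ¬ ReachWithin G (S₀ ∪ S₁) u v)
    (hS₀N : ∃ a ∈ N, ∃ s ∈ S₀, G.Adj a s) (hS₁N : ∃ a ∈ N, ∃ s ∈ S₁, G.Adj a s)
    (hS₀B : ∃ s ∈ S₀, ∃ b ∈ B, G.Adj s b) (hS₁B : ∃ s ∈ S₁, ∃ b ∈ B, G.Adj s b) :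
    ∃ a ∈ N, ∃ b ∈ B, ∃ (c : G.Walk a a) (p : G.Walk a b),
      IsInducedCycle G c ∧ p.length ≤ c.length := by
  classical
  obtain ⟨z₀, hz₀, hz₀S₀⟩ := hS₀N
  obtain ⟨z₁, hz₁, hz₁S₁⟩ := hS₁N
  obtain ⟨e₀, he₀, b₀, hb₀, he₀b₀⟩ := hS₀B
  obtain ⟨e₁, he₁, b₁, hb₁, he₁b₁⟩ := hS₁B
  obtain ⟨a₁, ⟨ha₁N, s₁', hs₁', ha₁s₁'⟩, a₀, ⟨ha₀N, s₀', hs₀', ha₀s₀'⟩, T, hTN, hT, hTc,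
      hTa₁, hTa₀⟩ :=
    exists_shortest_path (M := N) (A := {a ∈ N | ∃ s ∈ S₁, G.Adj a s})
      (B := {a ∈ N | ∃ s ∈ S₀, G.Adj a s}) ⟨z₁, ⟨hz₁, hz₁S₁⟩, z₀, ⟨hz₀, hz₀S₀⟩, hN z₁ hz₁ z₀ hz₀⟩
  have hQex : ReachWithin G (S₀ ∪ S₁ ∪ B) s₀' s₁' :=
    ((hS₀ s₀' hs₀' e₀ he₀).mono fun _ h => Or.inl (Or.inl h)).trans <|
      (ReachWithin.of_adj he₀b₀ (Or.inl (Or.inl he₀)) (Or.inr hb₀)).trans <|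
      ((hB b₀ hb₀ b₁ hb₁).mono fun _ => Or.inr).trans <|
      (ReachWithin.of_adj he₁b₁.symm (Or.inr hb₁) (Or.inl (Or.inr he₁))).trans <|
      (hS₁ e₁ he₁ s₁' hs₁').mono fun _ h => Or.inl (Or.inr h)
  obtain ⟨s₀, ⟨hs₀, ha₀s₀⟩, s₁, ⟨hs₁, ha₁s₁⟩, Q, hQM, hQ, hQc, hQs₀, hQs₁⟩ :=
    exists_shortest_path (M := S₀ ∪ S₁ ∪ B) (A := {s ∈ S₀ | G.Adj a₀ s})
      (B := {s ∈ S₁ | G.Adj a₁ s}) ⟨s₀', ⟨hs₀', ha₀s₀'⟩, s₁', ⟨hs₁', ha₁s₁'⟩, hQex⟩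
  obtain ⟨m, hmQ, hmB⟩ : ∃ m ∈ Q.support, m ∈ B := by
    by_contra! hQB
    refine hS₀₁ s₀ hs₀ s₁ hs₁ ⟨Q, fun z hz => ?_⟩
    exact (hQM z hz).resolve_right (hQB z hz)
  have hQT : ∀ u ∈ Q.support, ∀ v ∈ T.support,
      u ≠ v ∧ (G.Adj u v → (u = s₀ ∧ v = a₀) ∨ (u = s₁ ∧ v = a₁)) := by
    intro u hu v hv
    have hvN := hTN v hv
    rcases hQM u hu with huS | huB
    · refine ⟨fun h => hSN u huS (h ▸ hvN), fun huv => ?_⟩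
      rcases huS with hu₀ | hu₁
      · obtain rfl := hTa₀ v hv ⟨hvN, u, hu₀, huv.symm⟩
        exact Or.inl ⟨hQs₀ u hu ⟨hu₀, huv.symm⟩, rfl⟩
      · obtain rfl := hTa₁ v hv ⟨hvN, u, hu₁, huv.symm⟩
        exact Or.inr ⟨hQs₁ u hu ⟨hu₁, huv.symm⟩, rfl⟩
    · exact ⟨fun h => (hNB v hvN u huB).1 h.symm, fun huv => ((hNB v hvN u huB).2 huv.symm).elim⟩
  have hs : s₀ ≠ s₁ := fun h => hS₀₁ s₀ hs₀ s₁ hs₁ (h ▸ .refl (Or.inl hs₀))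
  refine ⟨a₀, ha₀N, m, hmB, _, cons ha₀s₀ (Q.takeUntil m hmQ),
    isInducedCycle_cons_append ha₀s₀ ha₁s₁.symm hQ hT hQc hTc hs hQT, ?_⟩
  have := Q.length_takeUntil_le_length hmQ
  simp only [length_cons, length_append]
  omega

theorem exists_inducedCycle_of_not_reachWithin {N B : Set V} {d₀ d₁ : V}
    (hN : ∀ u ∈ N, ∀ v ∈ N, ReachWithin G N u v) (hB : ∀ u ∈ B, ∀ v ∈ B, ReachWithin G B u v)
    (hNB : ∀ u ∈ N, ∀ v ∈ B, u ≠ v ∧ ¬ G.Adj u v)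
    (hd₀N : ∃ z ∈ N, G.Adj d₀ z) (hd₁N : ∃ z ∈ N, G.Adj d₁ z)
    (hd₀B : ∃ e b, ReachWithin G (N ∪ B)ᶜ d₀ e ∧ G.Adj e b ∧ b ∈ B)
    (hd₁B : ∃ e b, ReachWithin G (N ∪ B)ᶜ d₁ e ∧ G.Adj e b ∧ b ∈ B)
    (hne : ¬ ReachWithin G (N ∪ B)ᶜ d₀ d₁) :
    ∃ a ∈ N, ∃ b ∈ B, ∃ (c : G.Walk a a) (p : G.Walk a b),
      IsInducedCycle G c ∧ p.length ≤ c.length := by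
  obtain ⟨e₀, b₀, he₀, he₀b₀, hb₀⟩ := hd₀B
  obtain ⟨e₁, b₁, he₁, he₁b₁, hb₁⟩ := hd₁B
  obtain ⟨z₀, hz₀, hd₀z₀⟩ := hd₀N
  obtain ⟨z₁, hz₁, hd₁z₁⟩ := hd₁N
  have hW : ∀ v ∈ {v | ReachWithin G (N ∪ B)ᶜ d₀ v} ∪ {v | ReachWithin G (N ∪ B)ᶜ d₁ v},
      v ∈ (N ∪ B)ᶜ := by
    rintro v (hv | hv)
    exacts [ReachWithin.mem_right hv, ReachWithin.mem_right hv]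
  refine exists_inducedCycle_of_separated hN hB
    (fun _ hu _ hv => ReachWithin.reachWithin_setOf hu hv)
    (fun _ hu _ hv => ReachWithin.reachWithin_setOf hu hv) hNB
    (fun v hv hvN => hW v hv (Or.inl hvN))
    (fun u hu v hv huv => hne (ReachWithin.trans hu ((huv.mono hW).trans (ReachWithin.symm hv))))
    ⟨z₀, hz₀, d₀, .refl he₀.mem_left, hd₀z₀.symm⟩ ⟨z₁, hz₁, d₁, .refl he₁.mem_left, hd₁z₁.symm⟩
    ⟨e₀, he₀, b₀, hb₀, he₀b₀⟩ ⟨e₁, he₁, b₁, hb₁, he₁b₁⟩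

end

theorem at_most_one_component_adjacent_general {V : Type*} (G : SimpleGraph V) (t : ℕ)
    (ht : 1 ≤ t) (hfree : CgtFree G t)
    (X Y : Set V) (hX : (G.induce X).Connected) (hY : (G.induce Y).Connected)
    (hdist : ∀ x ∈ X, ∀ y ∈ Y, 10 * t < G.dist x y)
    (d₀ d₁ : V)
    (h₀ : d₀ ∉ closedNbhd G X ∪ closedNbhd G Y)
    (h₁ : d₁ ∉ closedNbhd G X ∪ closedNbhd G Y)
    (hc₀ : ∃ y ∈ Y, ReachWithin G (closedNbhd G X)ᶜ d₀ y)
    (hc₁ : ∃ y ∈ Y, ReachWithin G (closedNbhd G X)ᶜ d₁ y)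
    (ha₀ : ∃ z ∈ closedNbhd G X, G.Adj d₀ z)
    (ha₁ : ∃ z ∈ closedNbhd G X, G.Adj d₁ z) :
    ReachWithin G (closedNbhd G X ∪ closedNbhd G Y)ᶜ d₀ d₁ := by
  by_contra hne
  have hfar : ∀ a ∈ closedNbhd G X, ∀ b ∈ closedNbhd G Y, ∀ p : G.Walk a b,
      10 * t < p.length + 2 := by
    intro a ha b hb p
    obtain ⟨x, hx, y, hy, hxy⟩ := exists_dist_le_length_add_two ha hb p
    exact (hdist x hx y hy).trans_le hxy
  have hNB : ∀ u ∈ closedNbhd G X, ∀ v ∈ closedNbhd G Y, u ≠ v ∧ ¬ G.Adj u v := by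
    refine fun u hu v hv => ⟨?_, fun huv => ?_⟩
    · rintro rfl
      have := hfar u hu u hv nil
      simp only [length_nil] at this
      omega
    · have := hfar u hu v hv huv.toWalk
      simp only [Adj.length_toWalk] at this
      omega
  obtain ⟨y₀, hy₀, hr₀⟩ := hc₀
  obtain ⟨y₁, hy₁, hr₁⟩ := hc₁
  obtain ⟨a, ha, b, hb, c, p, hc, hpc⟩ := exists_inducedCycle_of_not_reachWithin
    (fun _ hu _ hv => reachWithin_closedNbhd hX hu hv)
    (fun _ hu _ hv => reachWithin_closedNbhd hY hu hv) hNB ha₀ ha₁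
    (hr₀.exists_adj_mem (Or.inl hy₀) (h₀ ∘ Or.inr)) (hr₁.exists_adj_mem (Or.inl hy₁) (h₁ ∘ Or.inr))
    hne
  have := hfar a ha b hb p
  have := hfree a c hc
  omega

/-- Let `G` be a connected `C_{>t}`-free graph (`t ≥ 1`), `X, Y ⊆ V(G)` with `G[X]` and
`G[Y]` connected, `Y` disjoint from `N[X]`, and distance between `X` and `Y` more than
`10t`. Then at most one connected component of `G − (N[X] ∪ N[Y])` contained in the
component of `G − N[X]` containing `Y` is adjacent to a vertex of `N[X]`: any two
vertices `d₀, d₁` of such components that are adjacent to `N[X]` lie in the same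
component of `G − (N[X] ∪ N[Y])`. -/
theorem at_most_one_component_adjacent {V : Type*} (G : SimpleGraph V) (t : ℕ)
    (ht : 1 ≤ t) (hconn : G.Connected) (hfree : CgtFree G t)
    (X Y : Set V) (hX : (G.induce X).Connected) (hY : (G.induce Y).Connected)
    (hdisj : Disjoint Y (closedNbhd G X))
    (hdist : ∀ x ∈ X, ∀ y ∈ Y, 10 * t < G.dist x y)
    (d₀ d₁ : V)
    (h₀ : d₀ ∉ closedNbhd G X ∪ closedNbhd G Y)
    (h₁ : d₁ ∉ closedNbhd G X ∪ closedNbhd G Y)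
    (hc₀ : ∃ y ∈ Y, ReachWithin G (closedNbhd G X)ᶜ d₀ y)
    (hc₁ : ∃ y ∈ Y, ReachWithin G (closedNbhd G X)ᶜ d₁ y)
    (ha₀ : ∃ z ∈ closedNbhd G X, G.Adj d₀ z)
    (ha₁ : ∃ z ∈ closedNbhd G X, G.Adj d₁ z) :
    ReachWithin G (closedNbhd G X ∪ closedNbhd G Y)ᶜ d₀ d₁ :=
  at_most_one_component_adjacent_general G t ht hfree X Y hX hY hdist d₀ d₁ h₀ h₁ hc₀ hc₁ ha₀ ha₁
end

section
/- Let 𝓕 be a nonempty finite family of nonempty finite sets (buckets), and let X be a set of at most t vertices of a graph G such that for at least half of the buckets B ∈ 𝓕, every element of B is a path intersected by N[X]. Then there exists a vertex x ∈ X such that for at least a 1/(2t) fraction of the buckets B ∈ 𝓕, the set N[x] intersects at least a 1/t fraction of the elements of B. -/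
open SimpleGraph

lemma mem_closedNbhd_finset_iff {V : Type*} (G : SimpleGraph V) (X : Finset V) (p : V) :
    p ∈ closedNbhd G (X : Set V) ↔ ∃ x ∈ X, p ∈ closedNbhd G ({x} : Set V) := by
  simp only [closedNbhd, Set.mem_setOf_eq, Set.mem_singleton_iff, Finset.mem_coe]
  constructor
  · rintro (h | ⟨x, hx, hadj⟩)
    · exact ⟨p, h, Or.inl rfl⟩
    · exact ⟨x, hx, Or.inr ⟨x, rfl, hadj⟩⟩
  · rintro ⟨x, hx, (rfl | ⟨y, rfl, hadj⟩)⟩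
    · exact Or.inl hx
    · exact Or.inr ⟨y, hx, hadj⟩

open Classical in
/-- Averaging argument: let `𝓕` be a nonempty finite family of nonempty finite buckets
(each bucket a finite set of paths, viewed as vertex subsets), and `X` a set of at most
`t` vertices of `G` such that for at least half of the buckets `B ∈ 𝓕`, every element of
`B` is intersected by `N[X]`. Then some `x ∈ X` is such that for at least a `1/(2t)`
fraction of the buckets `B ∈ 𝓕`, the set `N[x]` intersects at least a `1/t` fraction of
the elements of `B`. -/
theorem heavy_vertex_averaging {V : Type*} (G : SimpleGraph V) (t : ℕ)
    (X : Finset V) (hX : X.card ≤ t)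
    (𝓕 : Finset (Finset (Set V))) (h𝓕 : 𝓕.Nonempty)
    (hBne : ∀ B ∈ 𝓕, B.Nonempty)
    (hhalf : 𝓕.card ≤ 2 * (𝓕.filter (fun B =>
      ∀ P ∈ B, ∃ p ∈ P, p ∈ closedNbhd G (X : Set V))).card) :
    ∃ x ∈ X, 𝓕.card ≤ 2 * t * (𝓕.filter (fun B =>
      B.card ≤ t * (B.filter (fun P =>
        ∃ p ∈ P, p ∈ closedNbhd G ({x} : Set V))).card)).card := by
  classical
  set 𝓖 := 𝓕.filter (fun B => ∀ P ∈ B, ∃ p ∈ P, p ∈ closedNbhd G (X : Set V)) with h𝓖def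
  have h𝓖ne : 𝓖.Nonempty := by
    rw [← Finset.card_pos]
    have := h𝓕.card_pos
    omega
  have hXne : X.Nonempty := by
    obtain ⟨B, hB⟩ := h𝓖ne
    rw [h𝓖def, Finset.mem_filter] at hB
    obtain ⟨P, hP⟩ := hBne B hB.1
    obtain ⟨p, _, hp⟩ := hB.2 P hP
    obtain ⟨x, hx, -⟩ := (mem_closedNbhd_finset_iff G X p).1 hp
    exact ⟨x, hx⟩
  -- step 1: each bucket in 𝓖 is heavily hit by some x ∈ X
  have step1 : ∀ B ∈ 𝓖, ∃ x ∈ X, B.card ≤ t * (B.filter (fun P =>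
      ∃ p ∈ P, p ∈ closedNbhd G ({x} : Set V))).card := by
    intro B hB
    rw [h𝓖def, Finset.mem_filter] at hB
    set f := fun x => (B.filter (fun P =>
      ∃ p ∈ P, p ∈ closedNbhd G ({x} : Set V))).card with hf
    have hsub : B ⊆ X.biUnion (fun x => B.filter (fun P =>
        ∃ p ∈ P, p ∈ closedNbhd G ({x} : Set V))) := by
      intro P hP
      obtain ⟨p, hpP, hp⟩ := hB.2 P hP
      obtain ⟨x, hx, hpx⟩ := (mem_closedNbhd_finset_iff G X p).1 hp
      exact Finset.mem_biUnion.2 ⟨x, hx, Finset.mem_filter.2 ⟨hP, p, hpP, hpx⟩⟩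
    have hsum : B.card ≤ ∑ x ∈ X, f x :=
      le_trans (Finset.card_le_card hsub) (Finset.card_biUnion_le)
    obtain ⟨x0, hx0, hmax⟩ := X.exists_max_image f hXne
    refine ⟨x0, hx0, ?_⟩
    calc B.card ≤ ∑ x ∈ X, f x := hsum
      _ ≤ ∑ _x ∈ X, f x0 := Finset.sum_le_sum hmax
      _ = X.card * f x0 := by rw [Finset.sum_const, smul_eq_mul]
      _ ≤ t * f x0 := Nat.mul_le_mul_right _ hX
  -- step 2: pigeonhole over x ∈ X
  set g := fun x => (𝓕.filter (fun B =>
      B.card ≤ t * (B.filter (fun P =>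
        ∃ p ∈ P, p ∈ closedNbhd G ({x} : Set V))).card)).card with hg
  have hsub2 : 𝓖 ⊆ X.biUnion (fun x => 𝓕.filter (fun B =>
      B.card ≤ t * (B.filter (fun P =>
        ∃ p ∈ P, p ∈ closedNbhd G ({x} : Set V))).card)) := by
    intro B hB
    obtain ⟨x, hx, hxB⟩ := step1 B hB
    have hB𝓕 : B ∈ 𝓕 := (Finset.mem_filter.1 hB).1
    exact Finset.mem_biUnion.2 ⟨x, hx, Finset.mem_filter.2 ⟨hB𝓕, hxB⟩⟩
  have hsum2 : 𝓖.card ≤ ∑ x ∈ X, g x :=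
    le_trans (Finset.card_le_card hsub2) (Finset.card_biUnion_le)
  obtain ⟨x0, hx0, hmax⟩ := X.exists_max_image g hXne
  refine ⟨x0, hx0, ?_⟩
  have h1 : 𝓖.card ≤ t * g x0 := by
    calc 𝓖.card ≤ ∑ x ∈ X, g x := hsum2
      _ ≤ ∑ _x ∈ X, g x0 := Finset.sum_le_sum hmax
      _ = X.card * g x0 := by rw [Finset.sum_const, smul_eq_mul]
      _ ≤ t * g x0 := Nat.mul_le_mul_right _ hX
  calc 𝓕.card ≤ 2 * 𝓖.card := hhalf
    _ ≤ 2 * (t * g x0) := Nat.mul_le_mul_left _ h1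
    _ = 2 * t * g x0 := by ring
end

section
/- Let G be a d-degenerate graph and let G' be obtained from G by adding, for each vertex v, a new vertex v' adjacent to v and to all neighbors of v (a true twin of v). Then G' is (2d+1)-degenerate. -/
open SimpleGraph

/-- Adjacency of the graph obtained by adding a true twin of every vertex: the twin
`Sum.inr v` of a vertex `v` is adjacent to `v` and to (the originals and twins of) all
neighbors of `v`. -/
def twinAdj {V : Type*} (G : SimpleGraph V) : V ⊕ V → V ⊕ V → Prop
  | Sum.inl u, Sum.inl v => G.Adj u v
  | Sum.inl u, Sum.inr v => u = v ∨ G.Adj u v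
  | Sum.inr u, Sum.inl v => u = v ∨ G.Adj u v
  | Sum.inr u, Sum.inr v => G.Adj u v

/-- The graph obtained from `G` by adding a true twin of every vertex. -/
def twinExt {V : Type*} (G : SimpleGraph V) : SimpleGraph (V ⊕ V) where
  Adj := twinAdj G
  symm := by
    refine ⟨?_⟩
    rintro (u | u) (v | v) h <;> simp only [twinAdj] at h ⊢
    · exact h.symm
    · exact h.imp Eq.symm (fun ha => ha.symm)
    · exact h.imp Eq.symm (fun ha => ha.symm)
    · exact h.symm
  loopless := by
    refine ⟨?_⟩
    rintro (u | u) h <;> simp only [twinAdj] at h <;> exact G.ne_of_adj h rfl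

/-- A graph is `d`-degenerate if every nonempty (induced) subgraph has a vertex of degree
at most `d`. -/
def Degenerate {V : Type*} (G : SimpleGraph V) (d : ℕ) : Prop :=
  ∀ S : Set V, S.Nonempty → ∃ v ∈ S, (S ∩ G.neighborSet v).ncard ≤ d

/-!
Project `G'` onto `G` by forgetting which copy a vertex lies in. Given a nonempty `S ⊆ V ⊕ V`,
apply degeneracy of `G` to its projection `T` to get `v ∈ T` with at most `d` neighbours in `T`,
and let `x ∈ S` project to `v`. Every neighbour of `x` in `G'` is either the twin of `x` or lies
over a neighbour of `v` in `T`, and each vertex of `G` has two lifts, so `x` has at most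
`2d + 1` neighbours in `S`.
-/

namespace SimpleGraph

variable {V : Type*} (G : SimpleGraph V)

theorem twinExt_adj_iff {x y : V ⊕ V} :
    (twinExt G).Adj x y ↔ y = x.swap ∨ G.Adj (Sum.elim id id x) (Sum.elim id id y) := by
  rcases x with u | u <;> rcases y with w | w <;>
    simp [twinExt, twinAdj, eq_comm]

theorem twinExt_neighborSet (x : V ⊕ V) :
    (twinExt G).neighborSet x =
      insert x.swap (Sum.elim id id ⁻¹' G.neighborSet (Sum.elim id id x)) := by
  ext y
  exact G.twinExt_adj_iff

end SimpleGraph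

theorem Set.ncard_preimage_sumElim_id_le {V : Type*} (A : Set V) :
    (Sum.elim id id ⁻¹' A).ncard ≤ 2 * A.ncard := by
  rw [Set.preimage_sumElim, two_mul]
  refine (Set.ncard_union_le _ _).trans ?_
  rw [Set.ncard_image_of_injective _ Sum.inl_injective,
    Set.ncard_image_of_injective _ Sum.inr_injective]
  rfl

/-- If `G` is `d`-degenerate, then the graph obtained from `G` by adding a true twin of
every vertex is `(2d + 1)`-degenerate. -/
theorem twinExt_degenerate {V : Type*} (G : SimpleGraph V) (d : ℕ)
    (h : Degenerate G d) : Degenerate (twinExt G) (2 * d + 1) := by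
  intro S hS
  set p : V ⊕ V → V := Sum.elim id id
  obtain ⟨v, ⟨x, hxS, rfl⟩, hA⟩ := h (p '' S) (hS.image p)
  refine ⟨x, hxS, ?_⟩
  set N := S ∩ (twinExt G).neighborSet x
  set A := p '' S ∩ G.neighborSet (p x)
  rcases N.finite_or_infinite with hN | hN
  swap
  · simp [hN.ncard]
  have hNA : N ⊆ insert x.swap (p ⁻¹' A) := by
    rintro y ⟨hyS, hy⟩
    rw [twinExt_neighborSet] at hy
    exact hy.imp_right fun hy => ⟨Set.mem_image_of_mem p hyS, hy⟩
  have hAN : A ⊆ p '' N := by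
    rintro _ ⟨⟨y, hyS, rfl⟩, hy⟩
    exact ⟨y, ⟨hyS, (G.twinExt_adj_iff).2 (Or.inr hy)⟩, rfl⟩
  have hA_fin : A.Finite := (hN.image p).subset hAN
  calc N.ncard
      ≤ (insert x.swap (p ⁻¹' A)).ncard :=
        Set.ncard_le_ncard hNA <| Set.Finite.insert _ <| by
          rw [Set.preimage_sumElim]
          exact (hA_fin.image _).union (hA_fin.image _)
    _ ≤ (p ⁻¹' A).ncard + 1 := Set.ncard_insert_le _ _
    _ ≤ 2 * d + 1 := by
        gcongr
        exact (Set.ncard_preimage_sumElim_id_le A).trans (Nat.mul_le_mul_left 2 hA)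
end
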